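/- Generalized Hurwicz approximation guarantee (optimistic regime): under the same setting as before but with α ∈ (0, 1/2], if x̂ minimizes Σ_k v_k f(x,k) and x* minimizes H_α, then H_α(x̂) ≤ ((1−α)/α)·z·H_α(x*). -/

import Mathlib

/-!
Write `S x = ∑ₖ vₖ f(x,k) = ∑_F m(F) ∑_{k ∈ F} f(x,k)`. On each `F` the Hurwicz value
`α max + (1-α) min` is at most `(1-α)(max + min) ≤ (1-α) ∑_F f`, because `α ≤ 1-α` and `|F| ≥ 2`;
conversely `α ∑_F f ≤ α |F| max ≤ z (α max + (1-α) min)`. Summing with the weights `m` gives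
`H ≤ (1-α) S` and `α S ≤ z H`, and minimality of `x̂` for `S` chains them:
`H(x̂) ≤ (1-α) S(x̂) ≤ (1-α) S(x*) ≤ ((1-α)/α) z H(x*)`.
-/

open Finset

namespace Finset

variable {ι : Type*}

noncomputable def hurwicz (α : ℝ) (s : Finset ι) (hs : s.Nonempty) (g : ι → ℝ) : ℝ :=
  α * s.sup' hs g + (1 - α) * s.inf' hs g

lemma hurwicz_nonneg {α : ℝ} (hα₀ : 0 ≤ α) (hα₁ : α ≤ 1) {s : Finset ι} {g : ι → ℝ}
    (hg : ∀ k ∈ s, 0 ≤ g k) (hne : s.Nonempty) : 0 ≤ hurwicz α s hne g := by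
  have hsup : 0 ≤ s.sup' hne g := (hg _ hne.choose_spec).trans (le_sup' g hne.choose_spec)
  have hinf : 0 ≤ s.inf' hne g := le_inf' hne g hg
  unfold hurwicz
  have : 0 ≤ 1 - α := by linarith
  positivity

lemma sup'_add_inf'_le_sum [DecidableEq ι] {s : Finset ι} (hs : 2 ≤ s.card) {g : ι → ℝ}
    (hg : ∀ k ∈ s, 0 ≤ g k) (hne : s.Nonempty) :
    s.sup' hne g + s.inf' hne g ≤ ∑ k ∈ s, g k := by
  obtain ⟨a, ha, hsup⟩ := exists_mem_eq_sup' hne g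
  obtain ⟨b, hb, hba⟩ := exists_mem_ne (by omega : 1 < s.card) a
  have hpair : g a + g b ≤ ∑ k ∈ s, g k := by
    rw [← sum_pair hba.symm]
    exact sum_le_sum_of_subset_of_nonneg (insert_subset ha (singleton_subset_iff.mpr hb))
      fun k hk _ => hg k hk
  linarith [inf'_le g hb]

lemma hurwicz_le_one_sub_mul_sum {α : ℝ} (hα : α ≤ 1 / 2) {s : Finset ι} (hs : 2 ≤ s.card)
    {g : ι → ℝ} (hg : ∀ k ∈ s, 0 ≤ g k) (hne : s.Nonempty) :
    hurwicz α s hne g ≤ (1 - α) * ∑ k ∈ s, g k := by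
  classical
  have hsup : 0 ≤ s.sup' hne g := (hg _ hne.choose_spec).trans (le_sup' g hne.choose_spec)
  have hpair := sup'_add_inf'_le_sum hs hg hne
  unfold hurwicz
  nlinarith

lemma mul_sum_le_card_mul_hurwicz {α : ℝ} (hα₀ : 0 ≤ α) (hα₁ : α ≤ 1) {s : Finset ι}
    {g : ι → ℝ} (hg : ∀ k ∈ s, 0 ≤ g k) (hne : s.Nonempty) :
    α * ∑ k ∈ s, g k ≤ s.card * hurwicz α s hne g := by
  have hsum : ∑ k ∈ s, g k ≤ s.card * s.sup' hne g := by
    simpa using sum_le_card_nsmul s g _ fun k hk => le_sup' g hk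
  have hinf : 0 ≤ s.inf' hne g := le_inf' hne g hg
  unfold hurwicz
  nlinarith [mul_nonneg (mul_nonneg (Nat.cast_nonneg s.card) (sub_nonneg.mpr hα₁)) hinf]

section Family

variable (𝓕 : Finset (Finset ι)) (m : Finset ι → ℝ) (g : ι → ℝ)

lemma sum_mul_sum_filter_mem [Fintype ι] [DecidableEq ι] :
    ∑ k, (∑ F ∈ 𝓕.filter (fun F => k ∈ F), m F) * g k = ∑ F ∈ 𝓕, m F * ∑ k ∈ F, g k := by
  simp_rw [sum_mul, mul_sum, sum_filter]
  rw [sum_comm]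
  refine sum_congr rfl fun F _ => ?_
  rw [← sum_filter, filter_mem_eq_inter, univ_inter]

variable {𝓕 m g} (hne : ∀ F ∈ 𝓕, F.Nonempty) (hm : ∀ F ∈ 𝓕, 0 ≤ m F)
  (hg : ∀ k, 0 ≤ g k)
include hne hm hg

lemma sum_attach_mul_hurwicz_le {α : ℝ} (hα : α ≤ 1 / 2) (h𝓕 : ∀ F ∈ 𝓕, 2 ≤ F.card) :
    ∑ F ∈ 𝓕.attach, m F.1 * hurwicz α F.1 (hne F.1 F.2) g ≤
      (1 - α) * ∑ F ∈ 𝓕, m F * ∑ k ∈ F, g k := by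
  rw [← sum_attach 𝓕, mul_sum]
  refine sum_le_sum fun F _ => ?_
  rw [mul_left_comm]
  exact mul_le_mul_of_nonneg_left
    (hurwicz_le_one_sub_mul_sum hα (h𝓕 F.1 F.2) (fun k _ => hg k) _) (hm F.1 F.2)

lemma mul_sum_le_mul_sum_attach_hurwicz {α : ℝ} (hα₀ : 0 ≤ α) (hα₁ : α ≤ 1) {z : ℕ}
    (hz : ∀ F ∈ 𝓕, F.card ≤ z) :
    α * ∑ F ∈ 𝓕, m F * ∑ k ∈ F, g k ≤
      z * ∑ F ∈ 𝓕.attach, m F.1 * hurwicz α F.1 (hne F.1 F.2) g := by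
  rw [← sum_attach 𝓕, mul_sum, mul_sum]
  refine sum_le_sum fun F _ => ?_
  calc α * (m F.1 * ∑ k ∈ F.1, g k) = m F.1 * (α * ∑ k ∈ F.1, g k) := by ring
    _ ≤ m F.1 * (F.1.card * hurwicz α F.1 (hne F.1 F.2) g) :=
        mul_le_mul_of_nonneg_left
          (mul_sum_le_card_mul_hurwicz hα₀ hα₁ (fun k _ => hg k) _) (hm F.1 F.2)
    _ ≤ m F.1 * (z * hurwicz α F.1 (hne F.1 F.2) g) := by
        gcongr
        · exact hm F.1 F.2
        · exact hurwicz_nonneg hα₀ hα₁ (fun k _ => hg k) _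
        · exact_mod_cast hz F.1 F.2
    _ = z * (m F.1 * hurwicz α F.1 (hne F.1 F.2) g) := by ring

end Family

end Finset

theorem stmt_16 (K : ℕ)
    (𝓕 : Finset (Finset (Fin K))) (h𝓕 : ∀ F ∈ 𝓕, 2 ≤ F.card)
    (m : Finset (Fin K) → ℝ) (hm_pos : ∀ F ∈ 𝓕, 0 < m F)
    (z : ℕ) (hz : z = 𝓕.sup Finset.card)
    (X : Type*)
    (f : X → Fin K → ℝ) (hf : ∀ x k, 0 ≤ f x k)
    (v : Fin K → ℝ) (hv : ∀ k, v k = ∑ F ∈ 𝓕.filter (fun F => k ∈ F), m F)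
    (α : ℝ) (hα : 0 < α ∧ α ≤ 1 / 2)
    (H : X → ℝ)
    (hH : ∀ x, H x = ∑ F ∈ 𝓕.attach, m F.1 *
      (α * F.1.sup' (Finset.card_pos.mp (by have := h𝓕 F.1 F.2; omega)) (f x) +
       (1 - α) * F.1.inf' (Finset.card_pos.mp (by have := h𝓕 F.1 F.2; omega)) (f x)))
    (xhat xstar : X)
    (hxhat : ∀ x : X, ∑ k, v k * f xhat k ≤ ∑ k, v k * f x k) :
    H xhat ≤ ((1 - α) / α) * (z : ℝ) * H xstar := by
  obtain ⟨hα₀, hα₂⟩ := hα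
  have hne : ∀ F ∈ 𝓕, F.Nonempty := fun F hF => card_pos.mp (by have := h𝓕 F hF; omega)
  have hm : ∀ F ∈ 𝓕, 0 ≤ m F := fun F hF => (hm_pos F hF).le
  have hS : ∀ x, ∑ k, v k * f x k = ∑ F ∈ 𝓕, m F * ∑ k ∈ F, f x k := fun x => by
    simp_rw [hv]
    exact sum_mul_sum_filter_mem 𝓕 m (f x)
  have hupper : H xhat ≤ (1 - α) * ∑ k, v k * f xhat k := by
    rw [hH, hS]
    exact sum_attach_mul_hurwicz_le hne hm (hf xhat) hα₂ h𝓕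
  have hlower : α * ∑ k, v k * f xstar k ≤ z * H xstar := by
    rw [hH, hS]
    exact mul_sum_le_mul_sum_attach_hurwicz hne hm (hf xstar) hα₀.le (by linarith)
      fun F hF => hz ▸ le_sup hF
  calc H xhat ≤ (1 - α) * ∑ k, v k * f xhat k := hupper
    _ ≤ (1 - α) * ∑ k, v k * f xstar k := 
        mul_le_mul_of_nonneg_left (hxhat xstar) (by linarith)
    _ = (1 - α) / α * (α * ∑ k, v k * f xstar k) := by field_simp
    _ ≤ (1 - α) / α * (z * H xstar) := by
        gcongr
        exact div_nonneg (by linarith) hα₀.le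
    _ = (1 - α) / α * z * H xstar := by ring
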